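/- Finite conjunctions of flag-and-check queries can be internalized with only linear size increase while preserving linearity: given FCPs P₁,…,Pₙ of compatible arities with disjoint IDB predicates, each of whose rules contains at most one IDB atom in the body (linear), the program obtained by (i) replacing every rule φ → hit of Pᵢ with i < n by φ → Uᵢ(λ₁), and (ii) adding Uᵢ₋₁(λ₁) to the body of every IDB-free rule of Pᵢ for i > 1, is a linear FCP whose extension over every instance is the intersection of the extensions of P₁,…,Pₙ. -/

import Mathlib

/-!
Each program `Pᵢ` is simulated verbatim inside the combined program, except that its goal
`hit` is renamed to the flag `Uᵢ(λ₁)` and its derivations may only start once `U_{i-1}(λ₁)`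
holds: every derivation starts from an IDB-free rule, which is exactly where the guard
`U_{i-1}(λ₁)` is added. Hence, by induction on `i`, `Uᵢ(λ₁)` is derivable iff `P₀,…,Pᵢ` all
accept, and the last program's `hit` iff all of them do. Adding a guard only to IDB-free bodies
keeps every body linear.
-/

/-- Atoms over EDB predicates `(E, arE)` and IDB predicates `(Idb, arI)`, where terms
are variables (`ℕ`) or special constants `λ₁,…,λ_m` (`Fin m`). -/
inductive GAtom (E : Type) (arE : E → ℕ) (m : ℕ) (Idb : Type) (arI : Idb → ℕ) where
  | e (p : E) (args : Fin (arE p) → ℕ ⊕ Fin m)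
  | i (q : Idb) (args : Fin (arI q) → ℕ ⊕ Fin m)

/-- A Datalog rule with an IDB head. -/
structure GRule (E : Type) (arE : E → ℕ) (m : ℕ) (Idb : Type) (arI : Idb → ℕ) where
  body : List (GAtom E arE m Idb arI)
  headPred : Idb
  headArgs : Fin (arI headPred) → ℕ ⊕ Fin m

/-- Extend an IDB arity function to `Option Idb`, where `none` is the nullary
goal predicate `hit`. -/
def arO {B : Type} (f : B → ℕ) : Option B → ℕ
  | none => 0
  | some b => f b

/-- Whether an atom is an IDB atom (the goal `hit` counts as an IDB predicate). -/
def GAtom.isIDBb {E : Type} {arE : E → ℕ} {m : ℕ} {Idb : Type} {arI : Idb → ℕ} :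
    GAtom E arE m Idb arI → Bool
  | .e _ _ => false
  | .i _ _ => true

/-- Whether an atom is a `hit` atom. -/
def GAtom.isHit {E : Type} {arE : E → ℕ} {m : ℕ} {Idb : Type} {arI : Option Idb → ℕ} :
    GAtom E arE m (Option Idb) arI → Prop
  | .i none _ => True
  | _ => False

/-- An IDB fact over domain `D`. -/
def GFact (Idb : Type) (arI : Idb → ℕ) (D : Type) := Σ q : Idb, Fin (arI q) → D

/-- Satisfaction of an atom in the database `I` together with IDB facts `T`, under a
valuation `σ` of the variables, with special constants interpreted by `δ`. -/
def GAtom.holds {E : Type} {arE : E → ℕ} {m : ℕ} {Idb : Type} {arI : Idb → ℕ}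
    {D : Type} (I : ∀ p : E, Set (Fin (arE p) → D)) (T : Set (GFact Idb arI D))
    (σ : ℕ → D) (δ : Fin m → D) : GAtom E arE m Idb arI → Prop
  | .e p args => (fun j => Sum.elim σ δ (args j)) ∈ I p
  | .i q args => (⟨q, fun j => Sum.elim σ δ (args j)⟩ : GFact Idb arI D) ∈ T

/-- The immediate-consequence operator of program `P` over `I` with `λᵢ ↦ δᵢ`. -/
def gstep {E : Type} {arE : E → ℕ} {m : ℕ} {Idb : Type} {arI : Idb → ℕ} {D : Type}
    (P : List (GRule E arE m Idb arI)) (I : ∀ p : E, Set (Fin (arE p) → D))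
    (δ : Fin m → D) (T : Set (GFact Idb arI D)) : Set (GFact Idb arI D) :=
  { f | ∃ r ∈ P, ∃ σ : ℕ → D, (∀ a ∈ r.body, a.holds I T σ δ) ∧
        f = ⟨r.headPred, fun j => Sum.elim σ δ (r.headArgs j)⟩ }

/-- The least fixpoint of the immediate-consequence operator. -/
def glfp {E : Type} {arE : E → ℕ} {m : ℕ} {Idb : Type} {arI : Idb → ℕ} {D : Type}
    (P : List (GRule E arE m Idb arI)) (I : ∀ p : E, Set (Fin (arE p) → D))
    (δ : Fin m → D) : Set (GFact Idb arI D) :=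
  ⋂₀ { T | gstep P I δ T ⊆ T }

/-- `δ̄` is in the extension of the FCP `P` over `I`: the least fixpoint derives `hit`
(equivalently, every model expansion entails `hit`). -/
def fcpExt {E : Type} {arE : E → ℕ} {m : ℕ} {Idb : Type} {arI : Idb → ℕ} {D : Type}
    (P : List (GRule E arE m (Option Idb) (arO arI)))
    (I : ∀ p : E, Set (Fin (arE p) → D)) (δ : Fin m → D) : Prop :=
  ∃ f, (⟨none, f⟩ : GFact (Option Idb) (arO arI) D) ∈ glfp P I δ

section LeastFixpoint

variable {E : Type} {arE : E → ℕ} {m : ℕ} {Idb : Type} {arI : Idb → ℕ} {D : Type}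
  {I : ∀ p : E, Set (Fin (arE p) → D)} {δ : Fin m → D}

theorem GAtom.holds_mono {T T' : Set (GFact Idb arI D)} (h : T ⊆ T') {σ : ℕ → D}
    {a : GAtom E arE m Idb arI} (ha : a.holds I T σ δ) : a.holds I T' σ δ := by
  cases a with
  | e => exact ha
  | i => exact h ha

theorem gstep_mono (P : List (GRule E arE m Idb arI)) : Monotone (gstep P I δ) := by
  rintro T T' h f ⟨r, hr, σ, hbody, rfl⟩
  exact ⟨r, hr, σ, fun a ha => GAtom.holds_mono h (hbody a ha), rfl⟩

theorem glfp_eq_lfp (P : List (GRule E arE m Idb arI)) :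
    glfp P I δ = OrderHom.lfp (α := Set (GFact Idb arI D)) ⟨gstep P I δ, gstep_mono P⟩ :=
  rfl

theorem glfp_subset {P : List (GRule E arE m Idb arI)} {T : Set (GFact Idb arI D)}
    (h : gstep P I δ T ⊆ T) : glfp P I δ ⊆ T := by
  rw [glfp_eq_lfp]
  exact OrderHom.lfp_le (α := Set (GFact Idb arI D)) _ h

theorem gstep_glfp (P : List (GRule E arE m Idb arI)) :
    gstep P I δ (glfp P I δ) = glfp P I δ := by
  rw [glfp_eq_lfp]
  exact OrderHom.map_lfp (α := Set (GFact Idb arI D)) ⟨gstep P I δ, gstep_mono P⟩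

theorem head_mem_glfp {P : List (GRule E arE m Idb arI)} {r : GRule E arE m Idb arI}
    (hr : r ∈ P) {σ : ℕ → D} (hbody : ∀ a ∈ r.body, a.holds I (glfp P I δ) σ δ) :
    (⟨r.headPred, fun j => Sum.elim σ δ (r.headArgs j)⟩ : GFact Idb arI D) ∈ glfp P I δ :=
  (gstep_glfp P).subset ⟨r, hr, σ, hbody, rfl⟩

end LeastFixpoint

section Conjunction

variable (E : Type) (arE : E → ℕ) (m N : ℕ) (hm : 0 < m)
variable (Ii : Fin N → Type) (arI : ∀ i, Ii i → ℕ)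

/-- The combined IDB predicates: the (disjoint) IDB predicates of the programs
`P₁,…,P_N` together with fresh unary predicates `U₀,…,U_{N-1}`. -/
def IdbC : Type := (Σ i : Fin N, Ii i) ⊕ Fin N

/-- Arities of the combined IDB predicates. -/
def arC : IdbC N Ii → ℕ := Sum.elim (fun x => arI x.1 x.2) (fun _ => 1)

/-- The atom `Uₖ(λ₁)`. -/
def uAtom (k : Fin N) : GAtom E arE m (Option (IdbC N Ii)) (arO (arC N Ii arI)) :=
  .i (some (Sum.inr k)) (fun _ => Sum.inr (⟨0, hm⟩ : Fin m))

/-- Renaming the atoms of program `Pᵢ` into the combined signature. -/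
def mapAtom (i : Fin N) :
    GAtom E arE m (Option (Ii i)) (arO (arI i)) →
      GAtom E arE m (Option (IdbC N Ii)) (arO (arC N Ii arI))
  | .e p a => .e p a
  | .i none a => .i none a
  | .i (some q) a => .i (some (Sum.inl ⟨i, q⟩)) a

/-- The transformation of a rule of `Pᵢ`: (i) a rule `φ → hit` of `Pᵢ` with
`i < N-1` becomes `φ → Uᵢ(λ₁)` (the hit-rules of the last program are kept);
(ii) the body of every IDB-free rule of `Pᵢ` with `i > 0` gets the extra atom
`U_{i-1}(λ₁)`; all other atoms are just renamed into the combined signature. -/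
def transRule (i : Fin N) (r : GRule E arE m (Option (Ii i)) (arO (arI i))) :
    GRule E arE m (Option (IdbC N Ii)) (arO (arC N Ii arI)) :=
  let newBody : List (GAtom E arE m (Option (IdbC N Ii)) (arO (arC N Ii arI))) :=
    r.body.map (mapAtom E arE m N Ii arI i) ++
      (if 0 < i.val ∧ r.body.countP GAtom.isIDBb = 0 then
        [uAtom E arE m N hm Ii arI ⟨i.val - 1, Nat.lt_of_le_of_lt (Nat.sub_le _ _) i.isLt⟩]
      else [])
  match r with
  | ⟨_, none, _⟩ =>
      if i.val = N - 1 then ⟨newBody, none, Fin.elim0⟩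
      else ⟨newBody, some (Sum.inr i), fun _ => Sum.inr (⟨0, hm⟩ : Fin m)⟩
  | ⟨_, some q, hargs⟩ => ⟨newBody, some (Sum.inl ⟨i, q⟩), hargs⟩

/-- The transformed program: the union of the transformed rules of all the `Pᵢ`. -/
def transProg (Ps : ∀ i : Fin N, List (GRule E arE m (Option (Ii i)) (arO (arI i)))) :
    List (GRule E arE m (Option (IdbC N Ii)) (arO (arC N Ii arI))) :=
  (List.finRange N).flatMap fun i => (Ps i).map (transRule E arE m N hm Ii arI i)

section Transformation

variable {E arE m N hm Ii arI}

def transFact {D : Type} (δ : Fin m → D) (i : Fin N) :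
    GFact (Option (Ii i)) (arO (arI i)) D → GFact (Option (IdbC N Ii)) (arO (arC N Ii arI)) D
  | ⟨none, _⟩ =>
      if i.val = N - 1 then ⟨none, Fin.elim0⟩ else ⟨some (Sum.inr i), fun _ => δ ⟨0, hm⟩⟩
  | ⟨some q, v⟩ => ⟨some (Sum.inl ⟨i, q⟩), v⟩

theorem transFact_hit_of_ne {D : Type} (δ : Fin m → D) {i : Fin N} (h : i.val ≠ N - 1)
    (v : Fin (arO (arI i) none) → D) :
    transFact (hm := hm) δ i ⟨none, v⟩ = ⟨some (Sum.inr i), fun _ => δ ⟨0, hm⟩⟩ :=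
  if_neg h

theorem transFact_hit_of_eq {D : Type} (δ : Fin m → D) {i : Fin N} (h : i.val = N - 1)
    (v : Fin (arO (arI i) none) → D) :
    transFact (hm := hm) δ i ⟨none, v⟩ = ⟨none, Fin.elim0⟩ :=
  if_pos h

theorem transRule_body (i : Fin N) (r : GRule E arE m (Option (Ii i)) (arO (arI i))) :
    (transRule E arE m N hm Ii arI i r).body =
      r.body.map (mapAtom E arE m N Ii arI i) ++
        (if 0 < i.val ∧ r.body.countP GAtom.isIDBb = 0 then
          [uAtom E arE m N hm Ii arI ⟨i.val - 1, Nat.lt_of_le_of_lt (Nat.sub_le _ _) i.isLt⟩]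
        else []) := by
  obtain ⟨body, _ | q, hargs⟩ := r
  · simp only [transRule]
    split <;> rfl
  · rfl

theorem mapAtom_mem_transRule_body {i : Fin N} {r : GRule E arE m (Option (Ii i)) (arO (arI i))}
    {a : GAtom E arE m (Option (Ii i)) (arO (arI i))} (ha : a ∈ r.body) :
    mapAtom E arE m N Ii arI i a ∈ (transRule E arE m N hm Ii arI i r).body := by
  rw [transRule_body]
  exact List.mem_append_left _ (List.mem_map_of_mem ha)

theorem transRule_headFact {D : Type} (σ : ℕ → D) (δ : Fin m → D) (i : Fin N)
    (r : GRule E arE m (Option (Ii i)) (arO (arI i))) :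
    (⟨(transRule E arE m N hm Ii arI i r).headPred,
        fun j => Sum.elim σ δ ((transRule E arE m N hm Ii arI i r).headArgs j)⟩ :
        GFact (Option (IdbC N Ii)) (arO (arC N Ii arI)) D) =
      transFact (hm := hm) δ i ⟨r.headPred, fun j => Sum.elim σ δ (r.headArgs j)⟩ := by
  obtain ⟨body, _ | q, hargs⟩ := r
  · simp only [transRule, transFact]
    -- the head's arity depends on the condition, so case on the decision itself
    generalize instDecidableEqNat i.val (N - 1) = d
    cases d
    · rfl
    · exact congrArg _ (funext fun j => j.elim0)
  · rfl

theorem mem_transProg {Ps : ∀ i : Fin N, List (GRule E arE m (Option (Ii i)) (arO (arI i)))}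
    {r' : GRule E arE m (Option (IdbC N Ii)) (arO (arC N Ii arI))} :
    r' ∈ transProg E arE m N hm Ii arI Ps ↔
      ∃ i, ∃ r ∈ Ps i, transRule E arE m N hm Ii arI i r = r' := by
  simp [transProg]

theorem length_transProg (Ps : ∀ i : Fin N, List (GRule E arE m (Option (Ii i)) (arO (arI i)))) :
    (transProg E arE m N hm Ii arI Ps).length = ∑ i : Fin N, (Ps i).length := by
  simp [transProg, List.length_flatMap, Fin.sum_univ_def]

theorem countP_isIDBb_map_mapAtom (i : Fin N)
    (l : List (GAtom E arE m (Option (Ii i)) (arO (arI i)))) :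
    (l.map (mapAtom E arE m N Ii arI i)).countP GAtom.isIDBb = l.countP GAtom.isIDBb := by
  rw [List.countP_map]
  congr 1
  funext a
  rcases a with _ | ⟨_ | _, _⟩ <;> rfl

theorem countP_isIDBb_transRule_body_le_one {i : Fin N}
    {r : GRule E arE m (Option (Ii i)) (arO (arI i))} (hlin : r.body.countP GAtom.isIDBb ≤ 1) :
    (transRule E arE m N hm Ii arI i r).body.countP GAtom.isIDBb ≤ 1 := by
  rw [transRule_body, List.countP_append, countP_isIDBb_map_mapAtom]
  split_ifs with h
  · simp [h.2, uAtom, GAtom.isIDBb]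
  · simpa using hlin

end Transformation

section Semantics

variable {E arE m N hm Ii arI}
variable {Ps : ∀ i : Fin N, List (GRule E arE m (Option (Ii i)) (arO (arI i)))}
variable {D : Type} {I : ∀ p : E, Set (Fin (arE p) → D)} {δ : Fin m → D}

theorem mapAtom_holds_iff {i : Fin N} {a : GAtom E arE m (Option (Ii i)) (arO (arI i))}
    (ha : ¬ a.isHit) (T : Set (GFact (Option (IdbC N Ii)) (arO (arC N Ii arI)) D)) (σ : ℕ → D) :
    (mapAtom E arE m N Ii arI i a).holds I T σ δ ↔
      a.holds I (transFact (hm := hm) δ i ⁻¹' T) σ δ := by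
  rcases a with _ | ⟨_ | q, args⟩
  · rfl
  · exact absurd trivial ha
  · rfl

variable (Ps I δ) in
/-- The facts a derivation of the combined program can reach: a fact coming from `Pᵢ` certifies
that `P₀,…,P_{i-1}` accept, and `Uₖ` that `P₀,…,Pₖ` accept. -/
def conjInvariant : Set (GFact (Option (IdbC N Ii)) (arO (arC N Ii arI)) D)
  | ⟨none, _⟩ => ∀ j, fcpExt (Ps j) I δ
  | ⟨some (Sum.inl ⟨i, q⟩), v⟩ =>
      (∀ j < i, fcpExt (Ps j) I δ) ∧ ⟨some q, v⟩ ∈ glfp (Ps i) I δ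
  | ⟨some (Sum.inr k), _⟩ => ∀ j ≤ k, fcpExt (Ps j) I δ

theorem transFact_mem_conjInvariant {i : Fin N} {g : GFact (Option (Ii i)) (arO (arI i)) D}
    (hlt : ∀ j < i, fcpExt (Ps j) I δ) (hg : g ∈ glfp (Ps i) I δ) :
    transFact (hm := hm) δ i g ∈ conjInvariant Ps I δ := by
  obtain ⟨_ | q, v⟩ := g
  · have hle : ∀ j ≤ i, fcpExt (Ps j) I δ := fun j hj =>
      hj.eq_or_lt.elim (fun h => h ▸ ⟨v, hg⟩) (hlt j)
    by_cases h : i.val = N - 1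
    · rw [transFact_hit_of_eq δ h]
      exact fun j => hle j (show j.val ≤ i.val by omega)
    · rw [transFact_hit_of_ne δ h]
      exact hle
  · exact ⟨hlt, hg⟩

theorem holds_glfp_of_mapAtom_holds_conjInvariant {i : Fin N}
    {a : GAtom E arE m (Option (Ii i)) (arO (arI i))} (ha : ¬ a.isHit) {σ : ℕ → D}
    (h : (mapAtom E arE m N Ii arI i a).holds I (conjInvariant Ps I δ) σ δ) :
    a.holds I (glfp (Ps i) I δ) σ δ ∧ (a.isIDBb → ∀ j < i, fcpExt (Ps j) I δ) := by
  rcases a with _ | ⟨_ | q, args⟩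
  · exact ⟨h, nofun⟩
  · exact absurd trivial ha
  · exact ⟨h.2, fun _ => h.1⟩

theorem fcpExt_of_lt_of_transRule_body_holds {i : Fin N}
    {r : GRule E arE m (Option (Ii i)) (arO (arI i))} (hnohit : ∀ a ∈ r.body, ¬ a.isHit)
    {σ : ℕ → D}
    (h : ∀ a ∈ (transRule E arE m N hm Ii arI i r).body, a.holds I (conjInvariant Ps I δ) σ δ) :
    ∀ j < i, fcpExt (Ps j) I δ := by
  intro j hj
  by_cases hc : r.body.countP GAtom.isIDBb = 0
  · have hpos : 0 < i.val := Nat.lt_of_le_of_lt (Nat.zero_le _) hj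
    rw [transRule_body, if_pos ⟨hpos, hc⟩] at h
    exact h _ (List.mem_append_right _ (List.mem_singleton_self _)) j (Nat.le_sub_one_of_lt hj)
  · obtain ⟨a, ha, hIDB⟩ := List.countP_pos_iff.1 (Nat.pos_of_ne_zero hc)
    exact (holds_glfp_of_mapAtom_holds_conjInvariant (hnohit a ha)
      (h _ (mapAtom_mem_transRule_body ha))).2 hIDB j hj

theorem gstep_transProg_subset_conjInvariant
    (hnohit : ∀ i, ∀ r ∈ Ps i, ∀ a ∈ r.body, ¬ a.isHit) :
    gstep (transProg E arE m N hm Ii arI Ps) I δ (conjInvariant Ps I δ) ⊆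
      conjInvariant Ps I δ := by
  rintro _ ⟨_, hr', σ, hbody, rfl⟩
  obtain ⟨i, r, hr, rfl⟩ := mem_transProg.1 hr'
  rw [transRule_headFact]
  refine transFact_mem_conjInvariant
    (fcpExt_of_lt_of_transRule_body_holds (hnohit i r hr) hbody) (head_mem_glfp hr fun a ha => ?_)
  exact (holds_glfp_of_mapAtom_holds_conjInvariant (hnohit i r hr a ha)
    (hbody _ (mapAtom_mem_transRule_body ha))).1

theorem forall_fcpExt_of_fcpExt_transProg (hnohit : ∀ i, ∀ r ∈ Ps i, ∀ a ∈ r.body, ¬ a.isHit)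
    (h : fcpExt (transProg E arE m N hm Ii arI Ps) I δ) : ∀ i, fcpExt (Ps i) I δ :=
  let ⟨_, hf⟩ := h
  glfp_subset (gstep_transProg_subset_conjInvariant hnohit) hf

/-- Once `U_{i-1}(λ₁)` is derived, the combined program replays every derivation of `Pᵢ`. -/
theorem glfp_subset_preimage_transFact (hnohit : ∀ i, ∀ r ∈ Ps i, ∀ a ∈ r.body, ¬ a.isHit)
    {i : Fin N} (hprev : ∀ k : Fin N, k.val + 1 = i.val →
      ∃ v, transFact (hm := hm) δ k ⟨none, v⟩ ∈ glfp (transProg E arE m N hm Ii arI Ps) I δ) :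
    glfp (Ps i) I δ ⊆
      transFact (hm := hm) δ i ⁻¹' glfp (transProg E arE m N hm Ii arI Ps) I δ := by
  refine glfp_subset ?_
  rintro _ ⟨r, hr, σ, hbody, rfl⟩
  change transFact δ i _ ∈ glfp (transProg E arE m N hm Ii arI Ps) I δ
  rw [← transRule_headFact]
  refine head_mem_glfp (mem_transProg.2 ⟨i, r, hr, rfl⟩) fun a ha => ?_
  rw [transRule_body] at ha
  rcases List.mem_append.1 ha with ha | ha
  · obtain ⟨b, hb, rfl⟩ := List.mem_map.1 ha
    exact (mapAtom_holds_iff (hnohit i r hr b hb) _ σ).2 (hbody b hb)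
  · split_ifs at ha with hcond
    · obtain ⟨v, hv⟩ := hprev ⟨i.val - 1, by omega⟩ (by simp only; omega)
      rw [List.mem_singleton.1 ha]
      rwa [transFact_hit_of_ne δ (by simp only; omega)] at hv
    · simp at ha

theorem exists_transFact_mem_glfp_transProg
    (hnohit : ∀ i, ∀ r ∈ Ps i, ∀ a ∈ r.body, ¬ a.isHit) (hall : ∀ i, fcpExt (Ps i) I δ)
    (i : Fin N) :
    ∃ v, transFact (hm := hm) δ i ⟨none, v⟩ ∈ glfp (transProg E arE m N hm Ii arI Ps) I δ := by
  obtain ⟨n, hn⟩ := i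
  induction n with
  | zero =>
    exact ⟨_, glfp_subset_preimage_transFact hnohit (fun k hk => by simp at hk)
      (hall _).choose_spec⟩
  | succ n ih =>
    refine ⟨_, glfp_subset_preimage_transFact hnohit (fun k hk => ?_) (hall _).choose_spec⟩
    obtain rfl : k = ⟨n, Nat.lt_of_succ_lt hn⟩ := Fin.ext (by simpa using hk)
    exact ih _

theorem fcpExt_transProg_iff (hN : 0 < N) (hnohit : ∀ i, ∀ r ∈ Ps i, ∀ a ∈ r.body, ¬ a.isHit) :
    fcpExt (transProg E arE m N hm Ii arI Ps) I δ ↔ ∀ i, fcpExt (Ps i) I δ := by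
  refine ⟨forall_fcpExt_of_fcpExt_transProg hnohit, fun hall => ?_⟩
  obtain ⟨v, hv⟩ := exists_transFact_mem_glfp_transProg hnohit hall ⟨N - 1, by omega⟩
  exact ⟨_, transFact_hit_of_eq δ rfl v ▸ hv⟩

end Semantics

/-- Internalizing conjunctions of linear flag-and-check queries: for linear FCPs
`P₁,…,P_N` of the same arity `m` with disjoint IDB predicates and no `hit` atoms in
rule bodies, the transformed program has as many rules as all the `Pᵢ` together
(only linear size increase), is again linear, and its extension over every database
instance is the intersection of the extensions of `P₁,…,P_N`. -/
theorem fcp_conjunction_internalization (hN : 0 < N)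
    (Ps : ∀ i : Fin N, List (GRule E arE m (Option (Ii i)) (arO (arI i))))
    (hlin : ∀ i, ∀ r ∈ Ps i, r.body.countP GAtom.isIDBb ≤ 1)
    (hnohit : ∀ i, ∀ r ∈ Ps i, ∀ a ∈ r.body, ¬ a.isHit) :
    (transProg E arE m N hm Ii arI Ps).length = ∑ i : Fin N, (Ps i).length ∧
    (∀ r ∈ transProg E arE m N hm Ii arI Ps, r.body.countP GAtom.isIDBb ≤ 1) ∧
    ∀ (D : Type) (I : ∀ p : E, Set (Fin (arE p) → D)) (δ : Fin m → D),
      (fcpExt (transProg E arE m N hm Ii arI Ps) I δ ↔ ∀ i : Fin N, fcpExt (Ps i) I δ) := by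
  refine ⟨length_transProg Ps, fun r' hr' => ?_, fun D I δ => fcpExt_transProg_iff hN hnohit⟩
  obtain ⟨i, r, hr, rfl⟩ := mem_transProg.1 hr'
  exact countP_isIDBb_transRule_body_le_one (hlin i r hr)

end Conjunction
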